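/- (n = 2 inequality (32)) Let N_A, N_B ≥ 2. Let E₁^A, E₂^A be ℂ-linear maps on Matrix (Fin N_A) (Fin N_A) ℂ and E₁^B, E₂^B be ℂ-linear maps on Matrix (Fin N_B) (Fin N_B) ℂ, and let ε^A, ε^B ≥ 0 be such that ‖E₁^A(σ₁)‖_HS² + ‖E₂^A(σ₂)‖_HS² ≤ 2ε^A for all density matrices σ₁, σ₂ of size N_A, and ‖E₁^B(τ₁)‖_HS² + ‖E₂^B(τ₂)‖_HS² ≤ 2ε^B for all density matrices τ₁, τ₂ of size N_B. Let ρ = Σ_{i∈s} p_i (ρ_i^A ⊗ₖ ρ_i^B) be a separable state with p_i > 0, Σ p_i = 1, and marginals ρ_A, ρ_B, and define M := (1/2)·Σ_{i∈s} p_i ( E₁^A(ρ_i^A) ⊗ₖ E₁^B(ρ_i^B) + E₂^A(ρ_i^A) ⊗ₖ E₂^B(ρ_i^B) ) + (1/2)·( E₁^A(ρ_A) ⊗ₖ E₂^B(ρ_B) + E₂^A(ρ_A) ⊗ₖ E₁^B(ρ_B) ). Then ‖RM(M)‖_tr ≤ √( ε^A + Re⟨E₁^A(ρ_A), E₂^A(ρ_A)⟩_HS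 ) · √( ε^B + Re⟨E₁^B(ρ_B), E₂^B(ρ_B)⟩_HS ). -/

import Mathlib

open Matrix Kronecker Complex ComplexOrder

noncomputable def traceNorm {m n : Type*} [Fintype m] [Fintype n] [DecidableEq n]
    (M : Matrix m n ℂ) : ℝ :=
  ((((Matrix.isHermitian_conjTranspose_mul_self M).eigenvectorUnitary : Matrix n n ℂ) *
    diagonal (((↑) : ℝ → ℂ) ∘ (√·) ∘ (Matrix.isHermitian_conjTranspose_mul_self M).eigenvalues) *
    (star (Matrix.isHermitian_conjTranspose_mul_self M).eigenvectorUnitary : Matrix n n ℂ))).trace.re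

def realign {NA NB : ℕ} (ρ : Matrix (Fin NA × Fin NB) (Fin NA × Fin NB) ℂ) :
    Matrix (Fin NA × Fin NA) (Fin NB × Fin NB) ℂ :=
  fun p q => ρ (p.1, q.1) (p.2, q.2)

def IsDensityMatrix {n : Type*} [Fintype n] (ρ : Matrix n n ℂ) : Prop :=
  ρ.PosSemidef ∧ ρ.trace = 1

noncomputable def hsNorm {m n : Type*} [Fintype m] [Fintype n] (M : Matrix m n ℂ) : ℝ :=
  Real.sqrt (∑ i, ∑ j, ‖M i j‖ ^ 2)

noncomputable def hsInner {m n : Type*} [Fintype m] [Fintype n] (X Y : Matrix m n ℂ) : ℂ :=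
  (Xᴴ * Y).trace

noncomputable def marginalA {NA NB : ℕ} (ρ : Matrix (Fin NA × Fin NB) (Fin NA × Fin NB) ℂ) :
    Matrix (Fin NA) (Fin NA) ℂ :=
  fun m n => ∑ μ, ρ (m, μ) (n, μ)

noncomputable def marginalB {NA NB : ℕ} (ρ : Matrix (Fin NA × Fin NB) (Fin NA × Fin NB) ℂ) :
    Matrix (Fin NB) (Fin NB) ℂ :=
  fun μ ν => ∑ m, ρ (m, μ) (m, ν)

def SeparableState {NA NB : ℕ} (ρ : Matrix (Fin NA × Fin NB) (Fin NA × Fin NB) ℂ) : Prop :=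
  ∃ (ι : Type) (s : Finset ι) (p : ι → ℝ)
    (ρA : ι → Matrix (Fin NA) (Fin NA) ℂ) (ρB : ι → Matrix (Fin NB) (Fin NB) ℂ),
    (∀ i ∈ s, 0 < p i) ∧ (∑ i ∈ s, p i = 1) ∧
    (∀ i ∈ s, IsDensityMatrix (ρA i)) ∧ (∀ i ∈ s, IsDensityMatrix (ρB i)) ∧
    ρ = ∑ i ∈ s, (p i : ℂ) • (ρA i ⊗ₖ ρB i)

noncomputable def l2OpNorm {n : Type*} [Fintype n] [DecidableEq n] (M : Matrix n n ℂ) : ℝ :=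
  ‖Matrix.toEuclideanCLM (𝕜 := ℂ) (n := n) M‖

/-! Realignment sends `A ⊗ₖ B` to the rank-one matrix `vecMulVec (vec A) (vec B)`. Because
`∑ pᵢ = 1`, the matrix `M` equals `∑ᵢⱼ (pᵢ pⱼ / 2) (aᵢ + a'ⱼ) ⊗ₖ (bᵢ + b'ⱼ)`, where `aᵢ = E₁ᴬ(ρᵢᴬ)`,
`a'ⱼ = E₂ᴬ(ρⱼᴬ)` and `b`, `b'` are the analogues on `B`; so `RM(M)` is a nonnegative combination of
rank-one matrices. The trace norm of `∑ₖ cₖ xₖ yₖᵀ` is at most `∑ₖ |cₖ| ‖xₖ‖ ‖yₖ‖`: for an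
eigenbasis `v` of `NᴴN` the vectors `N vₖ` are orthogonal with the singular values of `N` as norms,
and Cauchy–Schwarz with Bessel's inequality bounds their sum. Weighted Cauchy–Schwarz splits the
resulting bound into an `A`-factor and a `B`-factor, and
`∑ᵢⱼ pᵢ pⱼ ‖aᵢ + a'ⱼ‖² = ∑ᵢ pᵢ (‖aᵢ‖² + ‖a'ᵢ‖²) + 2 Re ⟨E₁ᴬ(ρ_A), E₂ᴬ(ρ_A)⟩`
bounds the `A`-factor by `εᴬ + Re ⟨E₁ᴬ(ρ_A), E₂ᴬ(ρ_A)⟩`. -/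

open scoped InnerProductSpace

section ConvexCombination

variable {R P ι : Type*} [CommSemiring R] [AddCommMonoid P] [Module R P] {s : Finset ι}
  {q : ι → R}

theorem sum_sum_mul_smul_comm (f : ι → ι → P) :
    ∑ i ∈ s, ∑ j ∈ s, (q i * q j) • f j i = ∑ i ∈ s, ∑ j ∈ s, (q i * q j) • f i j := by
  rw [Finset.sum_comm]
  simp_rw [mul_comm (q _) (q _)]

theorem sum_sum_mul_smul_left (hq : ∑ i ∈ s, q i = 1) (f : ι → P) :
    ∑ i ∈ s, ∑ j ∈ s, (q i * q j) • f i = ∑ i ∈ s, q i • f i :=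
  Finset.sum_congr rfl fun i _ => by rw [← Finset.sum_smul, ← Finset.mul_sum, hq, mul_one]

theorem sum_sum_mul_smul_right (hq : ∑ i ∈ s, q i = 1) (f : ι → P) :
    ∑ i ∈ s, ∑ j ∈ s, (q i * q j) • f j = ∑ i ∈ s, q i • f i :=
  (sum_sum_mul_smul_comm fun i _ => f i).trans (sum_sum_mul_smul_left hq f)

theorem LinearMap.sum_sum_smul_apply_add_add {M N : Type*} [AddCommMonoid M] [AddCommMonoid N]
    [Module R M] [Module R N] (β : M →ₗ[R] N →ₗ[R] P) (hq : ∑ i ∈ s, q i = 1)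
    (a b : ι → M) (c d : ι → N) :
    ∑ i ∈ s, ∑ j ∈ s, (q i * q j) • β (a i + b j) (c i + d j) =
      ∑ i ∈ s, q i • β (a i) (c i) + ∑ i ∈ s, q i • β (b i) (d i) +
        β (∑ i ∈ s, q i • a i) (∑ i ∈ s, q i • d i) +
        β (∑ i ∈ s, q i • b i) (∑ i ∈ s, q i • c i) := by
  simp only [map_add, LinearMap.add_apply, smul_add, Finset.sum_add_distrib,
    sum_sum_mul_smul_left hq, sum_sum_mul_smul_right hq, map_sum, LinearMap.sum_apply, map_smul,
    LinearMap.smul_apply, Finset.smul_sum, smul_smul]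
  rw [sum_sum_mul_smul_comm fun i j => β (a i) (d j)]
  abel

end ConvexCombination

section InnerProductSpace

variable {𝕜 E : Type*} [RCLike 𝕜] [NormedAddCommGroup E] [InnerProductSpace 𝕜 E]

theorem sum_sum_mul_norm_add_sq {ι : Type*} (s : Finset ι) {p : ι → ℝ}
    (hp : ∑ i ∈ s, p i = 1) (x u : ι → E) :
    ∑ i ∈ s, ∑ j ∈ s, p i * p j * ‖x i + u j‖ ^ 2 =
      ∑ i ∈ s, p i * ‖x i‖ ^ 2 + ∑ i ∈ s, p i * ‖u i‖ ^ 2 +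
        2 * RCLike.re ⟪∑ i ∈ s, (p i : 𝕜) • x i, ∑ i ∈ s, (p i : 𝕜) • u i⟫_𝕜 := by
  have hcross : RCLike.re ⟪∑ i ∈ s, (p i : 𝕜) • x i, ∑ i ∈ s, (p i : 𝕜) • u i⟫_𝕜 =
      ∑ i ∈ s, ∑ j ∈ s, p i * p j * RCLike.re ⟪x i, u j⟫_𝕜 := by
    rw [sum_inner, map_sum]
    refine Finset.sum_congr rfl fun i _ => ?_
    simp [inner_sum, inner_smul_left, inner_smul_right, mul_assoc, mul_left_comm]
  have hleft := sum_sum_mul_smul_left hp fun i => ‖x i‖ ^ 2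
  have hright := sum_sum_mul_smul_right hp fun i => ‖u i‖ ^ 2
  simp only [smul_eq_mul] at hleft hright
  simp_rw [hcross, @norm_add_sq 𝕜, mul_add, Finset.sum_add_distrib, hleft, hright,
    Finset.mul_sum]
  rw [add_right_comm]
  congr 1
  exact Finset.sum_congr rfl fun i _ => Finset.sum_congr rfl fun j _ => by ring

theorem sum_product_mul_norm_add_sq_le {ι : Type*} (s : Finset ι) {p : ι → ℝ}
    (hp : ∀ i ∈ s, 0 ≤ p i) (hpsum : ∑ i ∈ s, p i = 1) (x u : ι → E) {ε : ℝ}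
    (hε : ∀ i ∈ s, ‖x i‖ ^ 2 + ‖u i‖ ^ 2 ≤ 2 * ε) :
    ∑ a ∈ s ×ˢ s, p a.1 * p a.2 / 2 * ‖x a.1 + u a.2‖ ^ 2 ≤
      ε + RCLike.re ⟪∑ i ∈ s, (p i : 𝕜) • x i, ∑ i ∈ s, (p i : 𝕜) • u i⟫_𝕜 := by
  have hdiag : ∑ i ∈ s, p i * ‖x i‖ ^ 2 + ∑ i ∈ s, p i * ‖u i‖ ^ 2 ≤ 2 * ε :=
    calc ∑ i ∈ s, p i * ‖x i‖ ^ 2 + ∑ i ∈ s, p i * ‖u i‖ ^ 2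
        = ∑ i ∈ s, p i * (‖x i‖ ^ 2 + ‖u i‖ ^ 2) := by
          rw [← Finset.sum_add_distrib]
          simp_rw [mul_add]
      _ ≤ ∑ i ∈ s, p i * (2 * ε) := Finset.sum_le_sum fun i hi => by
          gcongr
          exacts [hp i hi, hε i hi]
      _ = 2 * ε := by rw [← Finset.sum_mul, hpsum, one_mul]
  have hhalf : ∑ a ∈ s ×ˢ s, p a.1 * p a.2 / 2 * ‖x a.1 + u a.2‖ ^ 2 =
      (∑ i ∈ s, ∑ j ∈ s, p i * p j * ‖x i + u j‖ ^ 2) / 2 := by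
    rw [Finset.sum_product, Finset.sum_div]
    simp_rw [Finset.sum_div, div_mul_eq_mul_div]
  rw [hhalf, sum_sum_mul_norm_add_sq (𝕜 := 𝕜) s hpsum]
  linarith

-- Bessel's inequality for the normalised nonzero `w k`; the terms with `w k = 0` are `0 / 0 = 0`.
theorem sum_sq_norm_inner_div_norm_le {κ : Type*} [Fintype κ] {w : κ → E}
    (hw : Pairwise fun k l => ⟪w k, w l⟫_𝕜 = 0) (z : E) :
    ∑ k, (‖⟪w k, z⟫_𝕜‖ / ‖w k‖) ^ 2 ≤ ‖z‖ ^ 2 := by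
  classical
  set e : {k // w k ≠ 0} → E := fun k => (‖w k‖⁻¹ : 𝕜) • w k
  have he : Orthonormal 𝕜 e := by
    refine ⟨fun k => ?_, fun k l hkl => ?_⟩
    · simp [e, norm_smul, norm_ne_zero_iff.mpr k.2]
    · simp [e, inner_smul_left, inner_smul_right, hw (Subtype.coe_ne_coe.mpr hkl)]
  calc ∑ k, (‖⟪w k, z⟫_𝕜‖ / ‖w k‖) ^ 2
      = ∑ k : {k // w k ≠ 0}, ‖⟪e k, z⟫_𝕜‖ ^ 2 := by
        rw [← Finset.sum_filter_of_ne (p := fun k => w k ≠ 0) (fun k _ h hk => h (by simp [hk])),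
          Finset.sum_subtype _ fun k => Finset.mem_filter_univ k]
        refine Finset.sum_congr rfl fun k _ => ?_
        simp [e, inner_smul_left, div_eq_inv_mul]
    _ ≤ ‖z‖ ^ 2 := he.sum_inner_products_le z

theorem sum_norm_le_of_pairwise_inner_eq_zero {κ ι : Type*} [Fintype κ] {w : κ → E}
    (hw : Pairwise fun k l => ⟪w k, w l⟫_𝕜 = 0) (t : Finset ι) (c : ι → κ → 𝕜) (x : ι → E)
    (hwx : ∀ k, w k = ∑ a ∈ t, c a k • x a) :
    ∑ k, ‖w k‖ ≤ ∑ a ∈ t, √(∑ k, ‖c a k‖ ^ 2) * ‖x a‖ := by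
  have hnorm : ∀ k, ‖w k‖ = ∑ a ∈ t, RCLike.re (c a k * ⟪w k, x a⟫_𝕜) / ‖w k‖ := by
    intro k
    rw [← Finset.sum_div, ← map_sum]
    simp_rw [← inner_smul_right, ← inner_sum, ← hwx, inner_self_eq_norm_mul_norm,
      mul_self_div_self]
  calc ∑ k, ‖w k‖
      ≤ ∑ k, ∑ a ∈ t, ‖c a k‖ * (‖⟪w k, x a⟫_𝕜‖ / ‖w k‖) := by
        refine Finset.sum_le_sum fun k _ => (hnorm k).le.trans (Finset.sum_le_sum fun a _ => ?_)
        rw [mul_div_assoc', ← norm_mul]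
        exact div_le_div_of_nonneg_right (RCLike.re_le_norm _) (norm_nonneg _)
    _ = ∑ a ∈ t, ∑ k, ‖c a k‖ * (‖⟪w k, x a⟫_𝕜‖ / ‖w k‖) := Finset.sum_comm
    _ ≤ ∑ a ∈ t, √(∑ k, ‖c a k‖ ^ 2) * √(∑ k, (‖⟪w k, x a⟫_𝕜‖ / ‖w k‖) ^ 2) :=
        Finset.sum_le_sum fun a _ => Real.sum_mul_le_sqrt_mul_sqrt _ _ _
    _ ≤ ∑ a ∈ t, √(∑ k, ‖c a k‖ ^ 2) * ‖x a‖ := by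
        gcongr with a
        exact (Real.sqrt_le_sqrt (sum_sq_norm_inner_div_norm_le hw (x a))).trans_eq
          (Real.sqrt_sq (norm_nonneg _))

end InnerProductSpace

theorem sum_mul_mul_le_sqrt_mul_sqrt {ι : Type*} (t : Finset ι) {w f g : ι → ℝ}
    (hw : ∀ a ∈ t, 0 ≤ w a) :
    ∑ a ∈ t, w a * f a * g a ≤ √(∑ a ∈ t, w a * f a ^ 2) * √(∑ a ∈ t, w a * g a ^ 2) :=
  calc ∑ a ∈ t, w a * f a * g a = ∑ a ∈ t, (√(w a) * f a) * (√(w a) * g a) :=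
        Finset.sum_congr rfl fun a ha => by
          rw [mul_mul_mul_comm, Real.mul_self_sqrt (hw a ha), mul_assoc]
    _ ≤ √(∑ a ∈ t, (√(w a) * f a) ^ 2) * √(∑ a ∈ t, (√(w a) * g a) ^ 2) :=
        Real.sum_mul_le_sqrt_mul_sqrt _ _ _
    _ = √(∑ a ∈ t, w a * f a ^ 2) * √(∑ a ∈ t, w a * g a ^ 2) := by
        simp_rw [mul_pow]
        congr 2 <;> exact Finset.sum_congr rfl fun a ha => by rw [Real.sq_sqrt (hw a ha)]

section TraceNorm

variable {m n : Type*} [Fintype m] [Fintype n] [DecidableEq n]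

theorem traceNorm_eq_sum_sqrt_eigenvalues (M : Matrix m n ℂ) :
    traceNorm M = ∑ k, √((isHermitian_conjTranspose_mul_self M).eigenvalues k) := by
  rw [traceNorm, trace_mul_cycle, Unitary.star_mul_self_of_mem (SetLike.coe_mem _), one_mul,
    trace_diagonal]
  simp

theorem inner_mulVec_eigenvectorBasis (M : Matrix m n ℂ) (k l : n) :
    ⟪WithLp.toLp 2 (M *ᵥ (isHermitian_conjTranspose_mul_self M).eigenvectorBasis k),
      WithLp.toLp 2 (M *ᵥ (isHermitian_conjTranspose_mul_self M).eigenvectorBasis l)⟫_ℂ =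
      if k = l then ((isHermitian_conjTranspose_mul_self M).eigenvalues k : ℂ) else 0 := by
  set hA := isHermitian_conjTranspose_mul_self M
  have horth := orthonormal_iff_ite.mp hA.eigenvectorBasis.orthonormal k l
  rw [EuclideanSpace.inner_eq_star_dotProduct] at horth ⊢
  rw [dotProduct_comm, star_mulVec, ← dotProduct_mulVec, mulVec_mulVec,
    hA.mulVec_eigenvectorBasis, dotProduct_smul, dotProduct_comm, horth]
  split_ifs with h <;> simp [h]

theorem traceNorm_eq_sum_norm_mulVec_eigenvectorBasis (M : Matrix m n ℂ) :
    traceNorm M =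
      ∑ k, ‖WithLp.toLp 2 (M *ᵥ (isHermitian_conjTranspose_mul_self M).eigenvectorBasis k)‖ := by
  rw [traceNorm_eq_sum_sqrt_eigenvalues]
  refine Finset.sum_congr rfl fun k _ => ?_
  rw [norm_eq_sqrt_re_inner (𝕜 := ℂ), inner_mulVec_eigenvectorBasis, if_pos rfl]
  exact congrArg Real.sqrt (Complex.ofReal_re _).symm

theorem traceNorm_sum_smul_vecMulVec_le {ι : Type*} (t : Finset ι) (c : ι → ℂ)
    (x : ι → EuclideanSpace ℂ m) (y : ι → EuclideanSpace ℂ n) :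
    traceNorm (∑ a ∈ t, c a • vecMulVec (x a) (y a)) ≤ ∑ a ∈ t, ‖c a‖ * ‖x a‖ * ‖y a‖ := by
  set M := ∑ a ∈ t, c a • vecMulVec (x a) (y a)
  set v := (isHermitian_conjTranspose_mul_self M).eigenvectorBasis
  have hw : Pairwise fun k l => ⟪WithLp.toLp 2 (M *ᵥ v k), WithLp.toLp 2 (M *ᵥ v l)⟫_ℂ = 0 :=
    fun k l hkl => (inner_mulVec_eigenvectorBasis M k l).trans (if_neg hkl)
  have hMv : ∀ k, WithLp.toLp 2 (M *ᵥ v k) = ∑ a ∈ t, (c a * (y a ⬝ᵥ v k)) • x a := by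
    intro k
    ext i
    simp [M, sum_mulVec, smul_mulVec, vecMulVec_mulVec, mul_comm, mul_left_comm]
  have hcoeff : ∀ a, √(∑ k, ‖c a * (y a ⬝ᵥ v k)‖ ^ 2) = ‖c a‖ * ‖y a‖ := by
    intro a
    have hy : ∀ k, y a ⬝ᵥ v k = ⟪WithLp.toLp 2 (star ⇑(y a)), v k⟫_ℂ := by
      intro k
      simp [EuclideanSpace.inner_eq_star_dotProduct, dotProduct_comm]
    have hnorm : ‖WithLp.toLp 2 (star ⇑(y a))‖ = ‖y a‖ := by
      simp [EuclideanSpace.norm_eq]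
    simp_rw [norm_mul, mul_pow, ← Finset.mul_sum, hy, v.sum_sq_norm_inner_left, hnorm]
    rw [Real.sqrt_mul (by positivity), Real.sqrt_sq (norm_nonneg _), Real.sqrt_sq (norm_nonneg _)]
  rw [traceNorm_eq_sum_norm_mulVec_eigenvectorBasis]
  refine (sum_norm_le_of_pairwise_inner_eq_zero hw t _ x hMv).trans_eq ?_
  simp_rw [hcoeff, mul_right_comm]

end TraceNorm

section Vectorization

noncomputable def vecₗ {m n : Type*} : Matrix m n ℂ →ₗ[ℂ] EuclideanSpace ℂ (m × n) where
  toFun X := WithLp.toLp 2 fun p => X p.1 p.2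
  map_add' _ _ := rfl
  map_smul' _ _ := rfl

@[simp]
theorem vecₗ_apply {m n : Type*} (X : Matrix m n ℂ) (p : m × n) : vecₗ X p = X p.1 p.2 := rfl

variable {m n : Type*} [Fintype m] [Fintype n]

theorem norm_vecₗ (X : Matrix m n ℂ) : ‖vecₗ X‖ = hsNorm X := by
  rw [EuclideanSpace.norm_eq, hsNorm, Fintype.sum_prod_type]
  rfl

theorem inner_vecₗ (X Y : Matrix m n ℂ) : ⟪vecₗ X, vecₗ Y⟫_ℂ = hsInner X Y := by
  simp [EuclideanSpace.inner_eq_star_dotProduct, hsInner, Matrix.trace, dotProduct,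
    Fintype.sum_prod_type, Matrix.mul_apply]
  rw [Finset.sum_comm]
  simp_rw [mul_comm]

theorem sum_product_mul_hsNorm_add_sq_le {ι : Type*} (E₁ E₂ : Matrix n n ℂ →ₗ[ℂ] Matrix n n ℂ)
    (s : Finset ι) {p : ι → ℝ} (hp : ∀ i ∈ s, 0 ≤ p i) (hpsum : ∑ i ∈ s, p i = 1)
    (ρ : ι → Matrix n n ℂ) {ε : ℝ}
    (hε : ∀ i ∈ s, hsNorm (E₁ (ρ i)) ^ 2 + hsNorm (E₂ (ρ i)) ^ 2 ≤ 2 * ε) :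
    ∑ a ∈ s ×ˢ s, p a.1 * p a.2 / 2 * hsNorm (E₁ (ρ a.1) + E₂ (ρ a.2)) ^ 2 ≤
      ε + (hsInner (E₁ (∑ i ∈ s, (p i : ℂ) • ρ i)) (E₂ (∑ i ∈ s, (p i : ℂ) • ρ i))).re := by
  have h := sum_product_mul_norm_add_sq_le (𝕜 := ℂ) s hp hpsum (fun i => vecₗ (E₁ (ρ i)))
    (fun i => vecₗ (E₂ (ρ i))) (by simpa only [norm_vecₗ] using hε)
  simp only [← map_add, norm_vecₗ, ← map_smul, ← map_sum, inner_vecₗ] at h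
  exact h

end Vectorization

section Realignment

variable {NA NB : ℕ}

theorem realign_sum_smul_kronecker {κ : Type*} (t : Finset κ) (c : κ → ℂ)
    (A : κ → Matrix (Fin NA) (Fin NA) ℂ) (B : κ → Matrix (Fin NB) (Fin NB) ℂ) :
    realign (∑ a ∈ t, c a • (A a ⊗ₖ B a)) =
      ∑ a ∈ t, c a • vecMulVec (vecₗ (A a)) (vecₗ (B a)) := by
  ext P Q
  simp [realign, Matrix.sum_apply, vecMulVec]

theorem realign_eq_sum_smul_vecMulVec {ι : Type*} (s : Finset ι) {q : ι → ℂ}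
    (hq : ∑ i ∈ s, q i = 1) (a b : ι → Matrix (Fin NA) (Fin NA) ℂ)
    (c d : ι → Matrix (Fin NB) (Fin NB) ℂ) :
    realign ((1 / 2 : ℂ) • ∑ i ∈ s, q i • (a i ⊗ₖ c i + b i ⊗ₖ d i) +
        (1 / 2 : ℂ) • ((∑ i ∈ s, q i • a i) ⊗ₖ (∑ i ∈ s, q i • d i) +
          (∑ i ∈ s, q i • b i) ⊗ₖ (∑ i ∈ s, q i • c i))) =
      ∑ x ∈ s ×ˢ s,
        (q x.1 * q x.2 / 2) • vecMulVec (vecₗ (a x.1 + b x.2)) (vecₗ (c x.1 + d x.2)) := by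
  have hexpand := (kroneckerBilinear (R := ℂ) (α := ℂ)).sum_sum_smul_apply_add_add hq a b c d
  have hkron : ∀ (A : Matrix (Fin NA) (Fin NA) ℂ) (B : Matrix (Fin NB) (Fin NB) ℂ),
      kroneckerBilinear (R := ℂ) A B = A ⊗ₖ B := fun _ _ => rfl
  simp only [hkron] at hexpand
  rw [← realign_sum_smul_kronecker, Finset.sum_product]
  congr 1
  calc _ = (1 / 2 : ℂ) • (∑ i ∈ s, q i • (a i ⊗ₖ c i) + ∑ i ∈ s, q i • (b i ⊗ₖ d i) +
          (∑ i ∈ s, q i • a i) ⊗ₖ (∑ i ∈ s, q i • d i) +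
          (∑ i ∈ s, q i • b i) ⊗ₖ (∑ i ∈ s, q i • c i)) := by
        simp only [smul_add, Finset.sum_add_distrib]
        abel
    _ = _ := by
        rw [← hexpand, Finset.smul_sum]
        refine Finset.sum_congr rfl fun i _ => ?_
        rw [Finset.smul_sum]
        refine Finset.sum_congr rfl fun j _ => ?_
        rw [smul_smul]
        ring_nf

end Realignment

theorem n_two_inequality_thirty_two_general
    (NA NB : ℕ)
    (E₁A E₂A : Matrix (Fin NA) (Fin NA) ℂ →ₗ[ℂ] Matrix (Fin NA) (Fin NA) ℂ)
    (E₁B E₂B : Matrix (Fin NB) (Fin NB) ℂ →ₗ[ℂ] Matrix (Fin NB) (Fin NB) ℂ)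
    (εA εB : ℝ)
    (hboundA : ∀ σ₁ σ₂ : Matrix (Fin NA) (Fin NA) ℂ,
      IsDensityMatrix σ₁ → IsDensityMatrix σ₂ →
        hsNorm (E₁A σ₁) ^ 2 + hsNorm (E₂A σ₂) ^ 2 ≤ 2 * εA)
    (hboundB : ∀ τ₁ τ₂ : Matrix (Fin NB) (Fin NB) ℂ,
      IsDensityMatrix τ₁ → IsDensityMatrix τ₂ →
        hsNorm (E₁B τ₁) ^ 2 + hsNorm (E₂B τ₂) ^ 2 ≤ 2 * εB)
    {ι : Type} (s : Finset ι) (p : ι → ℝ)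
    (ρA : ι → Matrix (Fin NA) (Fin NA) ℂ) (ρB : ι → Matrix (Fin NB) (Fin NB) ℂ)
    (hp : ∀ i ∈ s, 0 < p i) (hpsum : ∑ i ∈ s, p i = 1)
    (hρA : ∀ i ∈ s, IsDensityMatrix (ρA i)) (hρB : ∀ i ∈ s, IsDensityMatrix (ρB i))
    (ρmA : Matrix (Fin NA) (Fin NA) ℂ) (ρmB : Matrix (Fin NB) (Fin NB) ℂ)
    (hρmA : ρmA = ∑ i ∈ s, (p i : ℂ) • ρA i) (hρmB : ρmB = ∑ i ∈ s, (p i : ℂ) • ρB i)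
    (M : Matrix (Fin NA × Fin NB) (Fin NA × Fin NB) ℂ)
    (hM : M = (1 / 2 : ℂ) • ∑ i ∈ s, (p i : ℂ) •
          (E₁A (ρA i) ⊗ₖ E₁B (ρB i) + E₂A (ρA i) ⊗ₖ E₂B (ρB i))
        + (1 / 2 : ℂ) • (E₁A ρmA ⊗ₖ E₂B ρmB + E₂A ρmA ⊗ₖ E₁B ρmB)) :
    traceNorm (realign M) ≤
      Real.sqrt (εA + (hsInner (E₁A ρmA) (E₂A ρmA)).re)
        * Real.sqrt (εB + (hsInner (E₁B ρmB) (E₂B ρmB)).re) := by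
  subst hρmA hρmB
  have hp₀ : ∀ i ∈ s, 0 ≤ p i := fun i hi => (hp i hi).le
  set w : ι × ι → ℝ := fun a => p a.1 * p a.2 / 2
  have hw : ∀ a ∈ s ×ˢ s, 0 ≤ w a := fun a ha => by
    obtain ⟨hi, hj⟩ := Finset.mem_product.1 ha
    exact div_nonneg (mul_nonneg (hp₀ _ hi) (hp₀ _ hj)) zero_le_two
  set x : ι × ι → EuclideanSpace ℂ (Fin NA × Fin NA) :=
    fun a => vecₗ (E₁A (ρA a.1) + E₂A (ρA a.2))
  set y : ι × ι → EuclideanSpace ℂ (Fin NB × Fin NB) :=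
    fun a => vecₗ (E₁B (ρB a.1) + E₂B (ρB a.2))
  have hdecomp : realign M = ∑ a ∈ s ×ˢ s, (w a : ℂ) • vecMulVec (x a) (y a) := by
    rw [hM]
    simp only [map_sum, map_smul]
    rw [realign_eq_sum_smul_vecMulVec s (by exact_mod_cast hpsum)]
    push_cast [w]
    rfl
  calc traceNorm (realign M) ≤ ∑ a ∈ s ×ˢ s, w a * ‖x a‖ * ‖y a‖ := by
        rw [hdecomp]
        refine (traceNorm_sum_smul_vecMulVec_le _ _ x y).trans_eq (Finset.sum_congr rfl ?_)
        intro a ha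
        rw [Complex.norm_real, Real.norm_of_nonneg (hw a ha)]
    _ ≤ √(∑ a ∈ s ×ˢ s, w a * ‖x a‖ ^ 2) * √(∑ a ∈ s ×ˢ s, w a * ‖y a‖ ^ 2) :=
        sum_mul_mul_le_sqrt_mul_sqrt _ hw
    _ ≤ _ := by
        simp only [x, y, norm_vecₗ]
        gcongr
        · exact sum_product_mul_hsNorm_add_sq_le E₁A E₂A s hp₀ hpsum ρA
            fun i hi => hboundA _ _ (hρA i hi) (hρA i hi)
        · exact sum_product_mul_hsNorm_add_sq_le E₁B E₂B s hp₀ hpsum ρB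
            fun i hi => hboundB _ _ (hρB i hi) (hρB i hi)

theorem n_two_inequality_thirty_two
    (NA NB : ℕ) (hNA : 2 ≤ NA) (hNB : 2 ≤ NB)
    (E₁A E₂A : Matrix (Fin NA) (Fin NA) ℂ →ₗ[ℂ] Matrix (Fin NA) (Fin NA) ℂ)
    (E₁B E₂B : Matrix (Fin NB) (Fin NB) ℂ →ₗ[ℂ] Matrix (Fin NB) (Fin NB) ℂ)
    (εA εB : ℝ) (hεA : 0 ≤ εA) (hεB : 0 ≤ εB)
    (hboundA : ∀ σ₁ σ₂ : Matrix (Fin NA) (Fin NA) ℂ,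
      IsDensityMatrix σ₁ → IsDensityMatrix σ₂ →
        hsNorm (E₁A σ₁) ^ 2 + hsNorm (E₂A σ₂) ^ 2 ≤ 2 * εA)
    (hboundB : ∀ τ₁ τ₂ : Matrix (Fin NB) (Fin NB) ℂ,
      IsDensityMatrix τ₁ → IsDensityMatrix τ₂ →
        hsNorm (E₁B τ₁) ^ 2 + hsNorm (E₂B τ₂) ^ 2 ≤ 2 * εB)
    {ι : Type} (s : Finset ι) (p : ι → ℝ)
    (ρA : ι → Matrix (Fin NA) (Fin NA) ℂ) (ρB : ι → Matrix (Fin NB) (Fin NB) ℂ)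
    (hp : ∀ i ∈ s, 0 < p i) (hpsum : ∑ i ∈ s, p i = 1)
    (hρA : ∀ i ∈ s, IsDensityMatrix (ρA i)) (hρB : ∀ i ∈ s, IsDensityMatrix (ρB i))
    (ρ : Matrix (Fin NA × Fin NB) (Fin NA × Fin NB) ℂ)
    (hρ : ρ = ∑ i ∈ s, (p i : ℂ) • (ρA i ⊗ₖ ρB i))
    (ρmA : Matrix (Fin NA) (Fin NA) ℂ) (ρmB : Matrix (Fin NB) (Fin NB) ℂ)
    (hρmA : ρmA = ∑ i ∈ s, (p i : ℂ) • ρA i) (hρmB : ρmB = ∑ i ∈ s, (p i : ℂ) • ρB i)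
    (M : Matrix (Fin NA × Fin NB) (Fin NA × Fin NB) ℂ)
    (hM : M = (1 / 2 : ℂ) • ∑ i ∈ s, (p i : ℂ) •
          (E₁A (ρA i) ⊗ₖ E₁B (ρB i) + E₂A (ρA i) ⊗ₖ E₂B (ρB i))
        + (1 / 2 : ℂ) • (E₁A ρmA ⊗ₖ E₂B ρmB + E₂A ρmA ⊗ₖ E₁B ρmB)) :
    traceNorm (realign M) ≤
      Real.sqrt (εA + (hsInner (E₁A ρmA) (E₂A ρmA)).re)
        * Real.sqrt (εB + (hsInner (E₁B ρmB) (E₂B ρmB)).re) :=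
  n_two_inequality_thirty_two_general NA NB E₁A E₂A E₁B E₂B εA εB hboundA hboundB s p ρA ρB hp hpsum
    hρA hρB ρmA ρmB hρmA hρmB M hM
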